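/- (Lemma on unique zero, Lemma 7.1/Appendix A) Let M, Λ > 0 with 0 < M < 1/(3√Λ), let r_b < r_c be the positive roots of 1-μ(r) = 0, and let ℓ ≥ 1 be an integer. Define h_ℓ(r) = ℓ(ℓ+1)(1-3M/r)/r³ + (M/r⁴)(3 - 8M/r) + MΛ/(3r²) - 2Λ²r/9. Then h_ℓ has exactly one zero r_{h_ℓ} in the open interval (r_b, r_c). -/

import Mathlib

/-!
Write `L = ℓ(ℓ+1)` and `A(r) = r³ h_ℓ(r) = L - 3(L-1)M/r - 8M²/r² + MΛr/3 - 2Λ²r⁴/9`.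
On `(0, ∞)` this is a sum of concave functions, strictly concave because of the quartic term.
At a horizon `3r = 6M + Λr³`, which turns `r² A(r)` into `(r - 3M)((L - 2)r + 6M)`; hence
`A(r_b) < 0 < A(r_c)`, since `r_b < 3M < r_c`. The latter holds because the cubic
`3r - 6M - Λr³ = -Λ(r - r_b)(r - r_c)(r + r_b + r_c)` equals `3M(1 - 9ΛM²) > 0` at `r = 3M`.
A strictly concave function that changes sign from negative to positive has exactly one zero
in between.
-/

open Set

theorem StrictConvexOn.const_mul {E : Type*} [AddCommMonoid E] [Module ℝ E] {s : Set E}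
    {f : E → ℝ} {c : ℝ} (hc : 0 < c) (hf : StrictConvexOn ℝ s f) :
    StrictConvexOn ℝ s fun x => c * f x :=
  ⟨hf.1, fun x hx y hy hxy a b ha hb hab => by
    have := mul_lt_mul_of_pos_left (hf.2 hx hy hxy ha hb hab) hc
    simp only [smul_eq_mul] at this ⊢
    linarith⟩

theorem StrictConcaveOn.existsUnique_zero_Ioo {s : Set ℝ} {f : ℝ → ℝ} {a b : ℝ}
    (hf : StrictConcaveOn ℝ s f) (hs : IsOpen s) (hab : a ≤ b) (habs : Icc a b ⊆ s)
    (ha : f a < 0) (hb : 0 < f b) : ∃! x, x ∈ Ioo a b ∧ f x = 0 := by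
  obtain ⟨x, hx, hfx⟩ := intermediate_value_Ioo hab
    ((hf.concaveOn.continuousOn hs).mono habs) ⟨ha, hb⟩
  have hbs : b ∈ s := habs (right_mem_Icc.2 hab)
  -- on the open segment from a zero to `b`, strict concavity gives `f > min 0 (f b) = 0`
  have no_zero_right : ∀ y ∈ Ioo a b, ∀ z ∈ Ioo y b, f y = 0 → f z ≠ 0 := by
    intro y hy z hz hfy
    have := hf.lt_on_openSegment (habs (Ioo_subset_Icc_self hy)) hbs hy.2.ne
      (by rwa [openSegment_eq_Ioo hy.2])
    rw [hfy, min_eq_left hb.le] at this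
    exact this.ne'
  refine ⟨x, ⟨hx, hfx⟩, fun y ⟨hy, hfy⟩ => ?_⟩
  rcases lt_trichotomy y x with hyx | rfl | hxy
  · exact absurd hfx (no_zero_right y hy x ⟨hyx, hx.2⟩ hfy)
  · rfl
  · exact absurd hfy (no_zero_right x hx y ⟨hxy, hy.2⟩ hfx)

theorem nine_mul_sq_lt_one {M Λ : ℝ} (hM : 0 ≤ M) (hΛ : 0 < Λ) (h : M < 1 / (3 * √Λ)) :
    9 * Λ * M ^ 2 < 1 := by
  have h3 : 3 * M * √Λ < 1 := by
    rw [lt_div_iff₀ (by positivity)] at h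
    linarith
  calc 9 * Λ * M ^ 2 = (3 * M * √Λ) ^ 2 := by rw [mul_pow, Real.sq_sqrt hΛ.le]; ring
    _ < 1 := pow_lt_one₀ (by positivity) h3 two_ne_zero

theorem horizon_cubic {M Λ r : ℝ} (hr : r ≠ 0) (h : 1 - (2 * M / r + Λ / 3 * r ^ 2) = 0) :
    3 * r = 6 * M + Λ * r ^ 3 := by
  field_simp at h
  linarith

theorem horizon_cubic_factor {M Λ rb rc : ℝ} (hne : rb ≠ rc)
    (hb : 3 * rb = 6 * M + Λ * rb ^ 3) (hc : 3 * rc = 6 * M + Λ * rc ^ 3) (r : ℝ) :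
    3 * r - 6 * M - Λ * r ^ 3 = -Λ * (r - rb) * (r - rc) * (r + rb + rc) := by
  have hsum : Λ * (rb ^ 2 + rb * rc + rc ^ 2) = 3 := by
    have : (rb - rc) * (Λ * (rb ^ 2 + rb * rc + rc ^ 2) - 3) = 0 := by
      linear_combination hc - hb
    simpa [sub_ne_zero.2 hne, sub_eq_zero] using this
  linear_combination hb + (rb - r) * hsum

theorem horizons_lt_three_mul_lt {M Λ rb rc : ℝ} (hM : 0 < M) (hΛ : 0 < Λ)
    (hMΛ : 9 * Λ * M ^ 2 < 1) (hrb : 0 < rb) (hlt : rb < rc)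
    (hb : 3 * rb = 6 * M + Λ * rb ^ 3) (hc : 3 * rc = 6 * M + Λ * rc ^ 3) :
    rb < 3 * M ∧ 3 * M < rc := by
  have hpos : 0 < 3 * (3 * M) - 6 * M - Λ * (3 * M) ^ 3 := by nlinarith
  rw [horizon_cubic_factor hlt.ne hb hc] at hpos
  have hprod : (3 * M - rb) * (3 * M - rc) < 0 := by
    by_contra! hcon
    have : 0 ≤ Λ * ((3 * M - rb) * (3 * M - rc)) * (3 * M + rb + rc) :=
      mul_nonneg (mul_nonneg hΛ.le hcon) (by linarith)
    linarith
  constructor <;> nlinarith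

/-- `h_ℓ` with `ℓ(ℓ+1)` replaced by a real parameter `L`. -/
noncomputable def hEll (L M Λ r : ℝ) : ℝ :=
  L * (1 - 3 * M / r) / r ^ 3 + M / r ^ 4 * (3 - 8 * M / r) + M * Λ / (3 * r ^ 2)
    - 2 * Λ ^ 2 * r / 9

noncomputable def cubeMulHEll (L M Λ r : ℝ) : ℝ :=
  L - 3 * (L - 1) * M / r - 8 * M ^ 2 / r ^ 2 + M * Λ / 3 * r - 2 * Λ ^ 2 / 9 * r ^ 4

theorem cubeMulHEll_eq {L M Λ r : ℝ} (hr : r ≠ 0) :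
    cubeMulHEll L M Λ r = r ^ 3 * hEll L M Λ r := by
  unfold cubeMulHEll hEll
  field_simp
  ring

theorem cubeMulHEll_eq_zero_iff {L M Λ r : ℝ} (hr : r ≠ 0) :
    cubeMulHEll L M Λ r = 0 ↔ hEll L M Λ r = 0 := by
  rw [cubeMulHEll_eq hr, mul_eq_zero, or_iff_right (pow_ne_zero 3 hr)]

theorem strictConcaveOn_cubeMulHEll {L M Λ : ℝ} (hL : 1 ≤ L) (hM : 0 ≤ M) (hΛ : Λ ≠ 0) :
    StrictConcaveOn ℝ (Ioi 0) (cubeMulHEll L M Λ) := by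
  have hinv : ConcaveOn ℝ (Ioi 0) fun r : ℝ => -((3 * (L - 1) * M) • r ^ (-1 : ℤ)) :=
    ((convexOn_zpow (-1)).smul (by nlinarith)).neg
  have hinvSq : ConcaveOn ℝ (Ioi 0) fun r : ℝ => -((8 * M ^ 2) • r ^ (-2 : ℤ)) :=
    ((convexOn_zpow (-2)).smul (by positivity)).neg
  have hlin : ConcaveOn ℝ (Ioi 0) fun r : ℝ => M * Λ / 3 * r :=
    (LinearMap.mul ℝ ℝ (M * Λ / 3)).concaveOn (convex_Ioi 0)
  have hquartic : StrictConcaveOn ℝ (Ioi 0) fun r : ℝ => -(2 * Λ ^ 2 / 9 * r ^ 4) :=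
    (((Even.strictConvexOn_pow (n := 4) (by decide) (by decide)).subset (subset_univ _)
      (convex_Ioi 0)).const_mul (by positivity)).neg
  refine ((((hquartic.add_concaveOn hlin).add_concaveOn hinvSq).add_concaveOn hinv).add_const
    L).congr fun r _ => ?_
  simp only [cubeMulHEll, Pi.add_apply, smul_eq_mul, zpow_neg, zpow_ofNat]
  ring

theorem sq_mul_cubeMulHEll_of_horizon {L M Λ r : ℝ} (hr : r ≠ 0)
    (h : 3 * r = 6 * M + Λ * r ^ 3) :
    r ^ 2 * cubeMulHEll L M Λ r = (r - 3 * M) * ((L - 2) * r + 6 * M) := by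
  have hΛr : Λ * r ^ 3 = 3 * r - 6 * M := by linarith
  calc r ^ 2 * cubeMulHEll L M Λ r
      = L * r ^ 2 - 3 * (L - 1) * M * r - 8 * M ^ 2 + M / 3 * (Λ * r ^ 3)
          - 2 / 9 * (Λ * r ^ 3) ^ 2 := by unfold cubeMulHEll; field_simp
    _ = (r - 3 * M) * ((L - 2) * r + 6 * M) := by rw [hΛr]; ring

theorem cubeMulHEll_neg_of_horizon {L M Λ r : ℝ} (hL : 2 ≤ L) (hM : 0 < M) (hr : 0 < r)
    (h : 3 * r = 6 * M + Λ * r ^ 3) (hr3M : r < 3 * M) : cubeMulHEll L M Λ r < 0 := by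
  have : r ^ 2 * cubeMulHEll L M Λ r < 0 := by
    rw [sq_mul_cubeMulHEll_of_horizon hr.ne' h]
    exact mul_neg_of_neg_of_pos (by linarith) (by nlinarith)
  exact neg_of_mul_neg_right this (sq_nonneg r)

theorem cubeMulHEll_pos_of_horizon {L M Λ r : ℝ} (hL : 2 ≤ L) (hM : 0 < M) (hr : 0 < r)
    (h : 3 * r = 6 * M + Λ * r ^ 3) (hr3M : 3 * M < r) : 0 < cubeMulHEll L M Λ r := by
  have : 0 < r ^ 2 * cubeMulHEll L M Λ r := by
    rw [sq_mul_cubeMulHEll_of_horizon hr.ne' h]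
    exact mul_pos (by linarith) (by nlinarith)
  exact pos_of_mul_pos_right this (sq_nonneg r)

/-- Lemma 7.1 / Appendix A: for every `ℓ ≥ 1`, the function
`h_ℓ(r) = ℓ(ℓ+1)(1-3M/r)/r³ + (M/r⁴)(3-8M/r) + MΛ/(3r²) - 2Λ²r/9`
has exactly one zero in the open interval `(r_b, r_c)`. -/
theorem h_ell_unique_zero (M Λ rb rc : ℝ) (hM : 0 < M) (hΛ : 0 < Λ)
    (hne : M < 1 / (3 * Real.sqrt Λ)) (hrb : 0 < rb) (hlt : rb < rc)
    (hrootb : 1 - (2 * M / rb + Λ / 3 * rb ^ 2) = 0)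
    (hrootc : 1 - (2 * M / rc + Λ / 3 * rc ^ 2) = 0)
    (ℓ : ℕ) (hℓ : 1 ≤ ℓ) :
    ∃! r : ℝ, r ∈ Set.Ioo rb rc ∧
      (ℓ : ℝ) * (ℓ + 1) * (1 - 3 * M / r) / r ^ 3
        + (M / r ^ 4) * (3 - 8 * M / r) + M * Λ / (3 * r ^ 2)
        - 2 * Λ ^ 2 * r / 9 = 0 := by
  have hL : 2 ≤ (ℓ : ℝ) * (ℓ + 1) := by
    have : (1 : ℝ) ≤ ℓ := by exact_mod_cast hℓ
    nlinarith
  have hrc : 0 < rc := hrb.trans hlt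
  have hb := horizon_cubic hrb.ne' hrootb
  have hc := horizon_cubic hrc.ne' hrootc
  obtain ⟨hb3M, hc3M⟩ := horizons_lt_three_mul_lt hM hΛ (nine_mul_sq_lt_one hM.le hΛ hne)
    hrb hlt hb hc
  have hA := (strictConcaveOn_cubeMulHEll (by linarith) hM.le hΛ.ne').existsUnique_zero_Ioo
    isOpen_Ioi hlt.le (fun r hr => hrb.trans_le hr.1)
    (cubeMulHEll_neg_of_horizon hL hM hrb hb hb3M) (cubeMulHEll_pos_of_horizon hL hM hrc hc hc3M)
  refine (existsUnique_congr fun r => and_congr_right fun hr => ?_).1 hA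
  exact cubeMulHEll_eq_zero_iff (hrb.trans hr.1).ne'
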